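/- arXiv:2101.11995 — 5 statements merged into one kernel-verified Lean document; each statement's English description precedes it below -/
import Mathlib

section
/- Let n ≥ 3 and let T be a standard Young tableau with n entries whose shape is a single row (n) or a single column (1,1,…,1). If S is any standard Young tableau with n entries whose set of 1-minors equals that of T, then S = T. -/
/-- A standard Young tableau with `n` entries, encoded by its entry function
`entry : ℕ × ℕ → ℕ`: `entry (i, j) = 0` means there is no cell in row `i` and
column `j` (both 0-indexed), and otherwise `entry (i, j)` is the label
(one of `1, …, n`) of the cell `(i, j)`.  Rows increase from left to right and
columns increase from top to bottom. -/
structure SYT (n : ℕ) where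
  entry : ℕ × ℕ → ℕ
  /-- the set of cells is the Young diagram of a partition -/
  diagram : ∀ i j i' j', i' ≤ i → j' ≤ j → entry (i, j) ≠ 0 → entry (i', j') ≠ 0
  /-- every label is at most `n` -/
  le_n : ∀ c, entry c ≤ n
  /-- every label in `1, …, n` appears in some cell -/
  exists_cell : ∀ k, 1 ≤ k → k ≤ n → ∃ c, entry c = k
  /-- each label appears in at most one cell -/
  inj : ∀ c c', entry c ≠ 0 → entry c = entry c' → c = c'
  /-- rows increase from left to right -/
  row_lt : ∀ i j, entry (i, j + 1) ≠ 0 → entry (i, j) < entry (i, j + 1)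
  /-- columns increase from top to bottom -/
  col_lt : ∀ i j, entry (i + 1, j) ≠ 0 → entry (i, j) < entry (i + 1, j)

/-- The shape (set of cells) of an entry function. -/
def shapeOf (f : ℕ × ℕ → ℕ) : Set (ℕ × ℕ) := {c | f c ≠ 0}

/-- The shape of a standard Young tableau: the set of cells of its
underlying Young diagram. -/
def SYT.shape {n : ℕ} (T : SYT n) : Set (ℕ × ℕ) := shapeOf T.entry

/-- `c` is an outer corner: a cell with no cell immediately to its right and
no cell immediately below it. -/
def IsOuterCorner (f : ℕ × ℕ → ℕ) (c : ℕ × ℕ) : Prop :=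
  f c ≠ 0 ∧ f (c.1, c.2 + 1) = 0 ∧ f (c.1 + 1, c.2) = 0

/-- Jeu de taquin sliding: starting with a vacant cell `c`, repeatedly slide
into the vacant cell the smaller of the entries immediately to the right of and
immediately below it, until neither exists.  `fuel` bounds the number of steps;
any `fuel ≥ n` suffices for a tableau with `n` entries, and extra fuel does not
change the result once the process has terminated. -/
def jdtAux : ℕ → (ℕ × ℕ → ℕ) → ℕ × ℕ → (ℕ × ℕ → ℕ)
  | 0, f, _ => f
  | fuel + 1, f, c =>
    let r := f (c.1, c.2 + 1)
    let b := f (c.1 + 1, c.2)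
    if r = 0 ∧ b = 0 then f
    else if b = 0 ∨ (r ≠ 0 ∧ r < b) then
      jdtAux fuel (Function.update (Function.update f c r) (c.1, c.2 + 1) 0) (c.1, c.2 + 1)
    else
      jdtAux fuel (Function.update (Function.update f c b) (c.1 + 1, c.2) 0) (c.1 + 1, c.2)

open Classical

/-- Deletion of the entry `m` from an entry function: vacate the cell
containing `m`, perform the jeu de taquin sliding process, and then renumber
each entry `p > m` to `p - 1`. -/
noncomputable def delRaw (fuel : ℕ) (f : ℕ × ℕ → ℕ) (m : ℕ) : ℕ × ℕ → ℕ :=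
  if h : 0 < m ∧ ∃ c, f c = m then
    let g := jdtAux fuel (Function.update f (Classical.choose h.2) 0) (Classical.choose h.2)
    fun x => if m < g x then g x - 1 else g x
  else f

/-- The 1-minor `T - m` of a standard Young tableau `T` with `n` entries,
as an entry function (a standard Young tableau with `n - 1` entries). -/
noncomputable def SYT.del {n : ℕ} (T : SYT n) (m : ℕ) : ℕ × ℕ → ℕ :=
  delRaw n T.entry m

/-- The set of 1-minors `M¹(T) = {T - m : 1 ≤ m ≤ n}` of `T`. -/
noncomputable def minors1 {n : ℕ} (T : SYT n) : Set (ℕ × ℕ → ℕ) :=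
  {g | ∃ m, 1 ≤ m ∧ m ≤ n ∧ g = T.del m}

/-- The multiset of 1-minors `⟦T - m : 1 ≤ m ≤ n⟧` of `T`,
counted with multiplicities. -/
noncomputable def minors1M {n : ℕ} (T : SYT n) : Multiset (ℕ × ℕ → ℕ) :=
  (Finset.Icc 1 n).val.map T.del


/-! ### Auxiliary definitions and lemmas -/

/-- The unique single-row standard Young tableau entry function. -/
def rowF (n : ℕ) : ℕ × ℕ → ℕ := fun c => if c.1 = 0 ∧ c.2 < n then c.2 + 1 else 0

/-- The unique single-column standard Young tableau entry function. -/
def colF (n : ℕ) : ℕ × ℕ → ℕ := fun c => if c.2 = 0 ∧ c.1 < n then c.1 + 1 else 0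

lemma rowF_apply (n i k : ℕ) : rowF n (i, k) = if i = 0 ∧ k < n then k + 1 else 0 := rfl

lemma colF_apply (n i k : ℕ) : colF n (i, k) = if k = 0 ∧ i < n then i + 1 else 0 := rfl

/-- Intermediate state of jeu de taquin on a single row: vacancy at column `j`. -/
def rowGap (n m j : ℕ) : ℕ × ℕ → ℕ := fun c =>
  if c.1 = 0 ∧ c.2 < n ∧ c.2 ≠ j then
    (if m - 1 ≤ c.2 ∧ c.2 < j then c.2 + 2 else c.2 + 1) else 0

/-- Intermediate state of jeu de taquin on a single column: vacancy at row `j`. -/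
def colGap (n m j : ℕ) : ℕ × ℕ → ℕ := fun c =>
  if c.2 = 0 ∧ c.1 < n ∧ c.1 ≠ j then
    (if m - 1 ≤ c.1 ∧ c.1 < j then c.1 + 2 else c.1 + 1) else 0

lemma rowGap_apply (n m j i k : ℕ) : rowGap n m j (i, k) =
    if i = 0 ∧ k < n ∧ k ≠ j then
      (if m - 1 ≤ k ∧ k < j then k + 2 else k + 1) else 0 := rfl

lemma colGap_apply (n m j i k : ℕ) : colGap n m j (i, k) =
    if k = 0 ∧ i < n ∧ i ≠ j then
      (if m - 1 ≤ i ∧ i < j then i + 2 else i + 1) else 0 := rfl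

lemma rowGap_jdt (n m : ℕ) : ∀ fuel j, m - 1 ≤ j → j < n → n - 1 - j ≤ fuel →
    jdtAux fuel (rowGap n m j) (0, j) = rowGap n m (n - 1) := by
  intro fuel
  induction fuel with
  | zero =>
    intro j h1 h2 h3
    have : j = n - 1 := by omega
    subst this
    rfl
  | succ fuel ih =>
    intro j h1 h2 h3
    by_cases hj : j = n - 1
    · subst hj
      have hr : rowGap n m (n - 1) (0, (n - 1) + 1) = 0 := by
        rw [rowGap_apply]
        split_ifs with h <;> omega
      have hb : rowGap n m (n - 1) (0 + 1, n - 1) = 0 := by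
        rw [rowGap_apply]
        split_ifs with h <;> omega
      rw [jdtAux]
      simp only [hr, hb, and_self, if_true]
    · have hjn : j + 1 < n := by omega
      have hr : rowGap n m j (0, j + 1) = j + 2 := by
        rw [rowGap_apply]
        rw [if_pos ⟨rfl, hjn, by omega⟩]
        split_ifs with h <;> omega
      have hb : rowGap n m j (0 + 1, j) = 0 := by
        rw [rowGap_apply]
        split_ifs with h <;> omega
      have hupd : Function.update (Function.update (rowGap n m j) (0, j) (j + 2)) (0, j + 1) 0
          = rowGap n m (j + 1) := by
        funext x
        obtain ⟨i, k⟩ := x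
        simp only [Function.update_apply, rowGap_apply, Prod.mk.injEq]
        split_ifs <;> omega
      rw [jdtAux]
      simp only [hr, hb]
      norm_num
      rw [hupd]
      exact ih (j + 1) (by omega) hjn (by omega)

lemma colGap_jdt (n m : ℕ) : ∀ fuel j, m - 1 ≤ j → j < n → n - 1 - j ≤ fuel →
    jdtAux fuel (colGap n m j) (j, 0) = colGap n m (n - 1) := by
  intro fuel
  induction fuel with
  | zero =>
    intro j h1 h2 h3
    have : j = n - 1 := by omega
    subst this
    rfl
  | succ fuel ih =>
    intro j h1 h2 h3
    by_cases hj : j = n - 1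
    · subst hj
      have hr : colGap n m (n - 1) (n - 1, 0 + 1) = 0 := by
        rw [colGap_apply]
        split_ifs with h <;> omega
      have hb : colGap n m (n - 1) ((n - 1) + 1, 0) = 0 := by
        rw [colGap_apply]
        split_ifs with h <;> omega
      rw [jdtAux]
      simp only [hr, hb, and_self, if_true]
    · have hjn : j + 1 < n := by omega
      have hb : colGap n m j (j + 1, 0) = j + 2 := by
        rw [colGap_apply]
        rw [if_pos ⟨rfl, hjn, by omega⟩]
        split_ifs with h <;> omega
      have hr : colGap n m j (j, 0 + 1) = 0 := by
        rw [colGap_apply]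
        split_ifs with h <;> omega
      have hupd : Function.update (Function.update (colGap n m j) (j, 0) (j + 2)) (j + 1, 0) 0
          = colGap n m (j + 1) := by
        funext x
        obtain ⟨i, k⟩ := x
        simp only [Function.update_apply, colGap_apply, Prod.mk.injEq]
        split_ifs <;> omega
      rw [jdtAux]
      simp only [hr, hb]
      norm_num
      rw [hupd]
      exact ih (j + 1) (by omega) hjn (by omega)

lemma delRaw_rowF (n m fuel : ℕ) (h1 : 1 ≤ m) (h2 : m ≤ n) (hf : n ≤ fuel) :
    delRaw fuel (rowF n) m = rowF (n - 1) := by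
  have hcell : rowF n (0, m - 1) = m := by
    rw [rowF_apply, if_pos ⟨rfl, by omega⟩]
    omega
  have hex : 0 < m ∧ ∃ c, rowF n c = m := ⟨h1, ⟨(0, m - 1), hcell⟩⟩
  rw [delRaw, dif_pos hex]
  have hch : Classical.choose hex.2 = (0, m - 1) := by
    have hspec := Classical.choose_spec hex.2
    set c0 := Classical.choose hex.2 with hc0
    have hspec2 : (if c0.1 = 0 ∧ c0.2 < n then c0.2 + 1 else 0) = m := hspec
    have hc01 : c0.1 = 0 ∧ c0.2 = m - 1 := by
      split_ifs at hspec2 with hik <;> omega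
    have he : c0 = (c0.1, c0.2) := rfl
    rw [he, hc01.1, hc01.2]
  rw [hch]
  have hupd : Function.update (rowF n) (0, m - 1) 0 = rowGap n m (m - 1) := by
    funext x
    obtain ⟨i, k⟩ := x
    simp only [Function.update_apply, rowF_apply, rowGap_apply, Prod.mk.injEq]
    split_ifs <;> omega
  rw [hupd, rowGap_jdt n m fuel (m - 1) le_rfl (by omega) (by omega)]
  funext x
  obtain ⟨i, k⟩ := x
  simp only [rowGap_apply, rowF_apply]
  split_ifs <;> omega

lemma delRaw_colF (n m fuel : ℕ) (h1 : 1 ≤ m) (h2 : m ≤ n) (hf : n ≤ fuel) :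
    delRaw fuel (colF n) m = colF (n - 1) := by
  have hcell : colF n (m - 1, 0) = m := by
    rw [colF_apply, if_pos ⟨rfl, by omega⟩]
    omega
  have hex : 0 < m ∧ ∃ c, colF n c = m := ⟨h1, ⟨(m - 1, 0), hcell⟩⟩
  rw [delRaw, dif_pos hex]
  have hch : Classical.choose hex.2 = (m - 1, 0) := by
    have hspec := Classical.choose_spec hex.2
    set c0 := Classical.choose hex.2 with hc0
    have hspec2 : (if c0.2 = 0 ∧ c0.1 < n then c0.1 + 1 else 0) = m := hspec
    have hc01 : c0.2 = 0 ∧ c0.1 = m - 1 := by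
      split_ifs at hspec2 with hik <;> omega
    have he : c0 = (c0.1, c0.2) := rfl
    rw [he, hc01.1, hc01.2]
  rw [hch]
  have hupd : Function.update (colF n) (m - 1, 0) 0 = colGap n m (m - 1) := by
    funext x
    obtain ⟨i, k⟩ := x
    simp only [Function.update_apply, colF_apply, colGap_apply, Prod.mk.injEq]
    split_ifs <;> omega
  rw [hupd, colGap_jdt n m fuel (m - 1) le_rfl (by omega) (by omega)]
  funext x
  obtain ⟨i, k⟩ := x
  simp only [colGap_apply, colF_apply]
  split_ifs <;> omega

lemma delRaw_corner (fuel : ℕ) (f : ℕ × ℕ → ℕ) (c : ℕ × ℕ) (m : ℕ)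
    (hm : 1 ≤ m) (hc : f c = m)
    (hinj : ∀ a b, f a ≠ 0 → f a = f b → a = b)
    (hr : f (c.1, c.2 + 1) = 0) (hb : f (c.1 + 1, c.2) = 0) (hf : 1 ≤ fuel) :
    delRaw fuel f m = fun x =>
      if m < Function.update f c 0 x then Function.update f c 0 x - 1
      else Function.update f c 0 x := by
  have hex : 0 < m ∧ ∃ c, f c = m := ⟨hm, ⟨c, hc⟩⟩
  rw [delRaw, dif_pos hex]
  have hch : Classical.choose hex.2 = c := by
    refine hinj _ _ ?_ ?_
    · rw [Classical.choose_spec hex.2]; omega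
    · rw [Classical.choose_spec hex.2, hc]
  rw [hch]
  obtain ⟨fuel', rfl⟩ : ∃ k, fuel = k + 1 := ⟨fuel - 1, by omega⟩
  have h1 : Function.update f c 0 (c.1, c.2 + 1) = 0 := by
    rw [Function.update_apply, if_neg, hr]
    intro hx
    have := congrArg Prod.snd hx
    simp at this
  have h2 : Function.update f c 0 (c.1 + 1, c.2) = 0 := by
    rw [Function.update_apply, if_neg, hb]
    intro hx
    have := congrArg Prod.fst hx
    simp at this
  have hjdt : jdtAux (fuel' + 1) (Function.update f c 0) c = Function.update f c 0 := by
    rw [jdtAux]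
    simp only [h1, h2, and_self, if_true]
  rw [hjdt]

lemma row_unique (n : ℕ) (T : SYT n) (h : T.shape = {c : ℕ × ℕ | c.1 = 0 ∧ c.2 < n}) :
    T.entry = rowF n := by
  have hmem : ∀ c : ℕ × ℕ, T.entry c ≠ 0 ↔ (c.1 = 0 ∧ c.2 < n) := by
    intro c
    exact Set.ext_iff.mp h c
  have hlow : ∀ j, j < n → j + 1 ≤ T.entry (0, j) := by
    intro j
    induction j with
    | zero =>
      intro h0
      have h1 := (hmem (0, 0)).mpr ⟨rfl, h0⟩
      omega
    | succ j ih =>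
      intro hj
      have h1 := T.row_lt 0 j ((hmem (0, j + 1)).mpr ⟨rfl, hj⟩)
      have h2 := ih (by omega)
      omega
  have hchain : ∀ d j, j + d < n → T.entry (0, j) + d ≤ T.entry (0, j + d) := by
    intro d
    induction d with
    | zero => intro j _; simp
    | succ d ih =>
      intro j hj
      have h1 := T.row_lt 0 (j + d) ((hmem (0, j + d + 1)).mpr ⟨rfl, by omega⟩)
      have h2 := ih j (by omega)
      have he : ((0 : ℕ), j + (d + 1)) = ((0 : ℕ), j + d + 1) := by
        simp only [Prod.mk.injEq, true_and, and_true]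
        omega
      rw [he]
      omega
  funext x
  obtain ⟨i, j⟩ := x
  by_cases hcell : i = 0 ∧ j < n
  · obtain ⟨rfl, hj⟩ := hcell
    have h1 := hlow j hj
    have h2 := hchain (n - 1 - j) j (by omega)
    have h3 := T.le_n (0, n - 1)
    have he : ((0 : ℕ), j + (n - 1 - j)) = ((0 : ℕ), n - 1) := by
      simp only [Prod.mk.injEq, true_and, and_true]
      omega
    rw [he] at h2
    rw [rowF_apply, if_pos ⟨rfl, hj⟩]
    omega
  · have h0 : T.entry (i, j) = 0 := by
      by_contra h0
      exact hcell ((hmem (i, j)).mp h0)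
    rw [h0, rowF_apply, if_neg hcell]

lemma col_unique (n : ℕ) (T : SYT n) (h : T.shape = {c : ℕ × ℕ | c.2 = 0 ∧ c.1 < n}) :
    T.entry = colF n := by
  have hmem : ∀ c : ℕ × ℕ, T.entry c ≠ 0 ↔ (c.2 = 0 ∧ c.1 < n) := by
    intro c
    exact Set.ext_iff.mp h c
  have hlow : ∀ j, j < n → j + 1 ≤ T.entry (j, 0) := by
    intro j
    induction j with
    | zero =>
      intro h0
      have h1 := (hmem (0, 0)).mpr ⟨rfl, h0⟩
      omega
    | succ j ih =>
      intro hj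
      have h1 := T.col_lt j 0 ((hmem (j + 1, 0)).mpr ⟨rfl, hj⟩)
      have h2 := ih (by omega)
      omega
  have hchain : ∀ d j, j + d < n → T.entry (j, 0) + d ≤ T.entry (j + d, 0) := by
    intro d
    induction d with
    | zero => intro j _; simp
    | succ d ih =>
      intro j hj
      have h1 := T.col_lt (j + d) 0 ((hmem (j + d + 1, 0)).mpr ⟨rfl, by omega⟩)
      have h2 := ih j (by omega)
      have he : (j + (d + 1), (0 : ℕ)) = (j + d + 1, (0 : ℕ)) := by
        simp only [Prod.mk.injEq, true_and, and_true]
        omega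
      rw [he]
      omega
  funext x
  obtain ⟨i, j⟩ := x
  by_cases hcell : j = 0 ∧ i < n
  · obtain ⟨rfl, hj⟩ := hcell
    have h1 := hlow i hj
    have h2 := hchain (n - 1 - i) i (by omega)
    have h3 := T.le_n (n - 1, 0)
    have he : (i + (n - 1 - i), (0 : ℕ)) = (n - 1, (0 : ℕ)) := by
      simp only [Prod.mk.injEq, true_and, and_true]
      omega
    rw [he] at h2
    rw [colF_apply, if_pos ⟨rfl, hj⟩]
    omega
  · have h0 : T.entry (i, j) = 0 := by
      by_contra h0
      exact hcell ((hmem (i, j)).mp h0)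
    rw [h0, colF_apply, if_neg hcell]

/-- A standard Young tableau with `n ≥ 3` entries whose shape is a single row
`(n)` or a single column `(1, 1, …, 1)` is reconstructible from its set of
1-minors. -/
theorem syt_single_row_or_column_reconstructible
    (n : ℕ) (hn : 3 ≤ n) (T : SYT n)
    (hshape : T.shape = {c : ℕ × ℕ | c.1 = 0 ∧ c.2 < n} ∨
      T.shape = {c : ℕ × ℕ | c.2 = 0 ∧ c.1 < n})
    (S : SYT n) (h : minors1 S = minors1 T) : S = T := by
  have ext : ∀ (A B : SYT n), A.entry = B.entry → A = B := by
    intro A B hAB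
    cases A; cases B
    simp only [SYT.mk.injEq]
    exact hAB
  -- locate n in S; its cell is an outer corner
  obtain ⟨c, hc⟩ := S.exists_cell n (by omega) le_rfl
  obtain ⟨a, b⟩ := c
  have hcr : S.entry (a, b + 1) = 0 := by
    by_contra h0
    have h1 := S.row_lt a b h0
    have h2 := S.le_n (a, b + 1)
    omega
  have hcb : S.entry (a + 1, b) = 0 := by
    by_contra h0
    have h1 := S.col_lt a b h0
    have h2 := S.le_n (a + 1, b)
    omega
  have hSdn := delRaw_corner n S.entry (a, b) n (by omega) hc S.inj hcr hcb (by omega)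
  have hSdn' : S.del n = Function.update S.entry (a, b) 0 := by
    show delRaw n S.entry n = _
    rw [hSdn]
    funext x
    have h1 : Function.update S.entry (a, b) 0 x ≤ n := by
      rw [Function.update_apply]
      split_ifs
      · omega
      · exact S.le_n x
    rw [if_neg (by omega)]
  have hmemn : S.del n ∈ minors1 T := by
    rw [← h]
    exact ⟨n, by omega, le_rfl, rfl⟩
  have hmemn1 : S.del (n - 1) ∈ minors1 T := by
    rw [← h]
    exact ⟨n - 1, by omega, by omega, rfl⟩
  have hcne : S.entry (a, b) ≠ 0 := by rw [hc]; omega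
  rcases hshape with hsh | hsh
  · -- row case
    have hT : T.entry = rowF n := row_unique n T hsh
    have hTdel : ∀ m, 1 ≤ m → m ≤ n → T.del m = rowF (n - 1) := by
      intro m hm1 hm2
      show delRaw n T.entry m = _
      rw [hT]
      exact delRaw_rowF n m n hm1 hm2 le_rfl
    obtain ⟨m, hm1, hm2, hSd⟩ := hmemn
    rw [hTdel m hm1 hm2, hSdn'] at hSd
    have hSx : ∀ x : ℕ × ℕ, x ≠ (a, b) → S.entry x = rowF (n - 1) x := by
      intro x hx
      rw [← hSd, Function.update_apply, if_neg hx]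
    have hcz : ¬(a = 0 ∧ b < n - 1) := by
      intro hcc
      have h0 := congrFun hSd (a, b)
      rw [Function.update_self, rowF_apply, if_pos hcc] at h0
      omega
    by_cases ha : a = 0
    · subst ha
      have hb : b = n - 1 := by
        by_contra hb
        have h1 : S.entry (0, n - 1) ≠ 0 :=
          S.diagram 0 b 0 (n - 1) le_rfl (by omega) hcne
        rw [hSx (0, n - 1) (by simp only [ne_eq, Prod.mk.injEq]; omega),
          rowF_apply] at h1
        rw [if_neg (by omega)] at h1
        exact h1 rfl
      subst hb
      refine ext S T ?_
      rw [hT]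
      funext x
      obtain ⟨i, k⟩ := x
      by_cases hx : (i, k) = ((0 : ℕ), n - 1)
      · rw [hx, hc]  -- careful: hc : S.entry (0, n-1) = n after substs
        rw [rowF_apply, if_pos ⟨rfl, by omega⟩]
        omega
      · rw [hSx (i, k) hx, rowF_apply, rowF_apply]
        simp only [ne_eq, Prod.mk.injEq, not_and] at hx
        split_ifs <;> omega
    · -- a ≠ 0 : show (a, b) = (1, 0), then contradiction
      have ha1 : a = 1 := by
        by_contra ha1
        have h1 : S.entry (1, b) ≠ 0 :=
          S.diagram a b 1 b (by omega) le_rfl hcne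
        rw [hSx (1, b) (by simp only [ne_eq, Prod.mk.injEq]; omega),
          rowF_apply, if_neg (by omega)] at h1
        exact h1 rfl
      subst ha1
      have hb0 : b = 0 := by
        by_contra hb0
        have h1 : S.entry (1, 0) ≠ 0 :=
          S.diagram 1 b 1 0 le_rfl (by omega) hcne
        rw [hSx (1, 0) (by simp only [ne_eq, Prod.mk.injEq]; omega),
          rowF_apply, if_neg (by omega)] at h1
        exact h1 rfl
      subst hb0
      -- compute S.del (n-1) and derive a contradiction
      exfalso
      have hS02 : S.entry (0, n - 2) = n - 1 := by
        rw [hSx (0, n - 2) (by simp only [ne_eq, Prod.mk.injEq]; omega),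
          rowF_apply, if_pos ⟨rfl, by omega⟩]
        omega
      have hr2 : S.entry (0, n - 2 + 1) = 0 := by
        rw [hSx (0, n - 2 + 1) (by simp only [ne_eq, Prod.mk.injEq]; omega),
          rowF_apply, if_neg (by omega)]
      have hb2 : S.entry (0 + 1, n - 2) = 0 := by
        rw [hSx (0 + 1, n - 2) (by simp only [ne_eq, Prod.mk.injEq]; omega),
          rowF_apply, if_neg (by omega)]
      have hdel := delRaw_corner n S.entry (0, n - 2) (n - 1) (by omega) hS02 S.inj hr2 hb2 (by omega)
      obtain ⟨m', hm1', hm2', hSd'⟩ := hmemn1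
      rw [hTdel m' hm1' hm2'] at hSd'
      have hSd'' : delRaw n S.entry (n - 1) = rowF (n - 1) := hSd'
      rw [hdel] at hSd''
      have hu : Function.update S.entry (0, n - 2) 0 (1, 0) = n := by
        rw [Function.update_apply, if_neg (by simp only [Prod.mk.injEq]; omega), hc]
      have h0 := congrFun hSd'' (1, 0)
      rw [hu, rowF_apply] at h0
      split_ifs at h0 <;> omega
  · -- column case
    have hT : T.entry = colF n := col_unique n T hsh
    have hTdel : ∀ m, 1 ≤ m → m ≤ n → T.del m = colF (n - 1) := by
      intro m hm1 hm2
      show delRaw n T.entry m = _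
      rw [hT]
      exact delRaw_colF n m n hm1 hm2 le_rfl
    obtain ⟨m, hm1, hm2, hSd⟩ := hmemn
    rw [hTdel m hm1 hm2, hSdn'] at hSd
    have hSx : ∀ x : ℕ × ℕ, x ≠ (a, b) → S.entry x = colF (n - 1) x := by
      intro x hx
      rw [← hSd, Function.update_apply, if_neg hx]
    have hcz : ¬(b = 0 ∧ a < n - 1) := by
      intro hcc
      have h0 := congrFun hSd (a, b)
      rw [Function.update_self, colF_apply, if_pos hcc] at h0
      omega
    by_cases hb : b = 0
    · subst hb
      have ha : a = n - 1 := by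
        by_contra ha
        have h1 : S.entry (n - 1, 0) ≠ 0 :=
          S.diagram a 0 (n - 1) 0 (by omega) le_rfl hcne
        rw [hSx (n - 1, 0) (by simp only [ne_eq, Prod.mk.injEq]; omega),
          colF_apply] at h1
        rw [if_neg (by omega)] at h1
        exact h1 rfl
      subst ha
      refine ext S T ?_
      rw [hT]
      funext x
      obtain ⟨i, k⟩ := x
      by_cases hx : (i, k) = (n - 1, (0 : ℕ))
      · rw [hx, hc]
        rw [colF_apply, if_pos ⟨rfl, by omega⟩]
        omega
      · rw [hSx (i, k) hx, colF_apply, colF_apply]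
        simp only [ne_eq, Prod.mk.injEq, not_and] at hx
        split_ifs <;> omega
    · -- b ≠ 0 : show (a, b) = (0, 1), then contradiction
      have hb1 : b = 1 := by
        by_contra hb1
        have h1 : S.entry (a, 1) ≠ 0 :=
          S.diagram a b a 1 le_rfl (by omega) hcne
        rw [hSx (a, 1) (by simp only [ne_eq, Prod.mk.injEq]; omega),
          colF_apply, if_neg (by omega)] at h1
        exact h1 rfl
      subst hb1
      have ha0 : a = 0 := by
        by_contra ha0
        have h1 : S.entry (0, 1) ≠ 0 :=
          S.diagram a 1 0 1 (by omega) le_rfl hcne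
        rw [hSx (0, 1) (by simp only [ne_eq, Prod.mk.injEq]; omega),
          colF_apply, if_neg (by omega)] at h1
        exact h1 rfl
      subst ha0
      exfalso
      have hS02 : S.entry (n - 2, 0) = n - 1 := by
        rw [hSx (n - 2, 0) (by simp only [ne_eq, Prod.mk.injEq]; omega),
          colF_apply, if_pos ⟨rfl, by omega⟩]
        omega
      have hr2 : S.entry (n - 2, 0 + 1) = 0 := by
        rw [hSx (n - 2, 0 + 1) (by simp only [ne_eq, Prod.mk.injEq]; omega),
          colF_apply, if_neg (by omega)]
      have hb2 : S.entry (n - 2 + 1, 0) = 0 := by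
        rw [hSx (n - 2 + 1, 0) (by simp only [ne_eq, Prod.mk.injEq]; omega),
          colF_apply, if_neg (by omega)]
      have hdel := delRaw_corner n S.entry (n - 2, 0) (n - 1) (by omega) hS02 S.inj hr2 hb2 (by omega)
      obtain ⟨m', hm1', hm2', hSd'⟩ := hmemn1
      rw [hTdel m' hm1' hm2'] at hSd'
      have hSd'' : delRaw n S.entry (n - 1) = colF (n - 1) := hSd'
      rw [hdel] at hSd''
      have hu : Function.update S.entry (n - 2, 0) 0 (0, 1) = n := by
        rw [Function.update_apply, if_neg (by simp only [Prod.mk.injEq]; omega), hc]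
      have h0 := congrFun hSd'' (0, 1)
      rw [hu, colF_apply] at h0
      split_ifs at h0 <;> omega
end

section
/- Let T be a standard Young tableau with 5 entries whose shape is (3,2) or (2,2,1). If S is any standard Young tableau with 5 entries whose set of 1-minors equals that of T, then S = T. -/
open Classical

def listFunAux : ℕ → List (ℕ × ℕ) → ℕ × ℕ → ℕ
  | _, [], _ => 0
  | k, c :: L, p => if p = c then k else listFunAux (k+1) L p

def listFun (L : List (ℕ × ℕ)) (p : ℕ × ℕ) : ℕ := listFunAux 1 L p

def delL (L : List (ℕ × ℕ)) (m : ℕ) : ℕ × ℕ → ℕ :=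
  let c := L.getD (m - 1) (0, 0)
  let g := jdtAux 5 (Function.update (listFun L) c 0) c
  fun x => if m < g x then g x - 1 else g x

def gridList : List (ℕ × ℕ) :=
  [(0,0),(0,1),(0,2),(0,3),(0,4),(1,0),(1,1),(1,2),(1,3),(2,0),(2,1),(2,2),(3,0),(3,1),(4,0)]

def tup (g : ℕ × ℕ → ℕ) : List ℕ := gridList.map g

def minorTups (L : List (ℕ × ℕ)) : List (List ℕ) :=
  [tup (delL L 1), tup (delL L 2), tup (delL L 3), tup (delL L 4), tup (delL L 5)]

def cells2 : List (ℕ × ℕ) := [(0,0),(0,1),(1,0)]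
def cells3 : List (ℕ × ℕ) := cells2 ++ [(0,2),(1,1),(2,0)]
def cells4 : List (ℕ × ℕ) := cells3 ++ [(0,3),(1,2),(2,1),(3,0)]
def cells5 : List (ℕ × ℕ) := cells4 ++ [(0,4),(1,3),(2,2),(3,1),(4,0)]

def nb (c : ℕ × ℕ) (P : List (ℕ × ℕ)) : Prop :=
  (c.2 = 0 ∨ (c.1, c.2 - 1) ∈ P) ∧ (c.1 = 0 ∨ (c.1 - 1, c.2) ∈ P)

instance (c : ℕ × ℕ) (P : List (ℕ × ℕ)) : Decidable (nb c P) := by unfold nb; infer_instance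

def valid26 : List (List (ℕ × ℕ)) :=
 [[(0, 0), (0, 1), (1, 0), (0, 2), (1, 1)], [(0, 0), (0, 1), (1, 0), (0, 2), (2, 0)],
  [(0, 0), (0, 1), (1, 0), (0, 2), (0, 3)], [(0, 0), (0, 1), (1, 0), (1, 1), (0, 2)],
  [(0, 0), (0, 1), (1, 0), (1, 1), (2, 0)], [(0, 0), (0, 1), (1, 0), (2, 0), (0, 2)],
  [(0, 0), (0, 1), (1, 0), (2, 0), (1, 1)], [(0, 0), (0, 1), (1, 0), (2, 0), (3, 0)],
  [(0, 0), (0, 1), (0, 2), (1, 0), (1, 1)], [(0, 0), (0, 1), (0, 2), (1, 0), (2, 0)],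
  [(0, 0), (0, 1), (0, 2), (1, 0), (0, 3)], [(0, 0), (0, 1), (0, 2), (0, 3), (1, 0)],
  [(0, 0), (0, 1), (0, 2), (0, 3), (0, 4)], [(0, 0), (1, 0), (0, 1), (0, 2), (1, 1)],
  [(0, 0), (1, 0), (0, 1), (0, 2), (2, 0)], [(0, 0), (1, 0), (0, 1), (0, 2), (0, 3)],
  [(0, 0), (1, 0), (0, 1), (1, 1), (0, 2)], [(0, 0), (1, 0), (0, 1), (1, 1), (2, 0)],
  [(0, 0), (1, 0), (0, 1), (2, 0), (0, 2)], [(0, 0), (1, 0), (0, 1), (2, 0), (1, 1)],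
  [(0, 0), (1, 0), (0, 1), (2, 0), (3, 0)], [(0, 0), (1, 0), (2, 0), (0, 1), (0, 2)],
  [(0, 0), (1, 0), (2, 0), (0, 1), (1, 1)], [(0, 0), (1, 0), (2, 0), (0, 1), (3, 0)],
  [(0, 0), (1, 0), (2, 0), (3, 0), (0, 1)], [(0, 0), (1, 0), (2, 0), (3, 0), (4, 0)]]

def valid10 : List (List (ℕ × ℕ)) :=
 [[(0, 0), (0, 1), (1, 0), (0, 2), (1, 1)], [(0, 0), (0, 1), (1, 0), (1, 1), (0, 2)],
  [(0, 0), (0, 1), (1, 0), (1, 1), (2, 0)], [(0, 0), (0, 1), (1, 0), (2, 0), (1, 1)],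
  [(0, 0), (0, 1), (0, 2), (1, 0), (1, 1)], [(0, 0), (1, 0), (0, 1), (0, 2), (1, 1)],
  [(0, 0), (1, 0), (0, 1), (1, 1), (0, 2)], [(0, 0), (1, 0), (0, 1), (1, 1), (2, 0)],
  [(0, 0), (1, 0), (0, 1), (2, 0), (1, 1)], [(0, 0), (1, 0), (2, 0), (0, 1), (1, 1)]]

set_option maxRecDepth 10000 in
lemma R : ∀ c2 ∈ cells2, ∀ c3 ∈ cells3, ∀ c4 ∈ cells4, ∀ c5 ∈ cells5,
    ([((0:ℕ),(0:ℕ)), c2, c3, c4, c5].Nodup) →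
    nb c2 [(0,0)] → nb c3 [(0,0), c2] → nb c4 [(0,0), c2, c3] → nb c5 [(0,0), c2, c3, c4] →
    [(0,0), c2, c3, c4, c5] ∈ valid26 := by decide

lemma Shp : ∀ L ∈ valid26,
    (((0,0) ∈ L ∧ (0,1) ∈ L ∧ (0,2) ∈ L ∧ (1,0) ∈ L ∧ (1,1) ∈ L) ∨
     ((0,0) ∈ L ∧ (0,1) ∈ L ∧ (1,0) ∈ L ∧ (1,1) ∈ L ∧ (2,0) ∈ L)) → L ∈ valid10 := by decide

set_option maxRecDepth 100000 in
lemma Q : ∀ LS ∈ valid26, ∀ LT ∈ valid10,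
    (∀ t ∈ minorTups LS, t ∈ minorTups LT) → (∀ t ∈ minorTups LT, t ∈ minorTups LS) →
    LS = LT := by decide
-- abstract lemmas, to be appended after dec.lean content for testing
lemma listFunAux_ne_zero : ∀ (L : List (ℕ × ℕ)) (k : ℕ) (p : ℕ × ℕ), k ≠ 0 →
    (listFunAux k L p ≠ 0 ↔ p ∈ L) := by
  intro L
  induction L with
  | nil => intro k p hk; simp [listFunAux]
  | cons c L ih =>
    intro k p hk
    simp only [listFunAux, List.mem_cons]
    by_cases hpc : p = c
    · simp [hpc, hk]
    · simp [hpc]; exact ih (k+1) p (by omega)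

lemma listFun_ne_zero (L : List (ℕ × ℕ)) (p : ℕ × ℕ) : listFun L p ≠ 0 ↔ p ∈ L :=
  listFunAux_ne_zero L 1 p one_ne_zero

lemma listFun_eq_zero (L : List (ℕ × ℕ)) (p : ℕ × ℕ) (h : p ∉ L) : listFun L p = 0 := by
  by_contra hne
  exact h ((listFun_ne_zero L p).mp hne)

lemma listFunAux_shift : ∀ (L : List (ℕ × ℕ)) (k : ℕ) (p : ℕ × ℕ), p ∈ L →
    listFunAux (k + 1) L p = listFunAux k L p + 1 := by
  intro L
  induction L with
  | nil => intro k p hp; simp at hp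
  | cons c L ih =>
    intro k p hp
    simp only [listFunAux]
    by_cases hpc : p = c
    · simp [hpc]
    · simp only [if_neg hpc]
      exact ih (k+1) p (by rcases List.mem_cons.mp hp with h | h; exact absurd h hpc; exact h)

lemma listFun_getD : ∀ (L : List (ℕ × ℕ)), L.Nodup → ∀ i, i < L.length → ∀ d,
    listFun L (L.getD i d) = i + 1 := by
  intro L
  induction L with
  | nil => intro _ i hi; simp at hi
  | cons c L ih =>
    intro hnd i hi d
    rcases List.nodup_cons.mp hnd with ⟨hc, hnd'⟩
    cases i with
    | zero => simp [listFun, listFunAux]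
    | succ i =>
      have hi' : i < L.length := by simpa using hi
      have hmem : L.getD i d ∈ L := by
        rw [List.getD_eq_getElem L d hi']; exact List.getElem_mem _
      have hne : L.getD i d ≠ c := fun e => hc (e ▸ hmem)
      show listFunAux 1 (c :: L) (L.getD i d) = i + 2
      simp only [listFunAux, if_neg hne]
      rw [listFunAux_shift L 1 _ hmem]
      show listFun L (L.getD i d) + 1 = i + 2
      rw [ih hnd' i hi' d]
lemma cell_eq (S : SYT 5) {c d : ℕ × ℕ} {v : ℕ} (hc : S.entry c = v) (hd : S.entry d = v)
    (h0 : v ≠ 0) : c = d :=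
  S.inj c d (by rw [hc]; exact h0) (hc.trans hd.symm)

lemma left_pred (S : SYT 5) (i j : ℕ) (hj : j ≠ 0) (h0 : S.entry (i, j) ≠ 0) :
    S.entry (i, j - 1) ≠ 0 ∧ S.entry (i, j - 1) < S.entry (i, j) := by
  obtain ⟨j', rfl⟩ : ∃ j', j = j' + 1 := ⟨j - 1, by omega⟩
  simp only [Nat.add_sub_cancel]
  exact ⟨S.diagram i (j' + 1) i j' le_rfl (by omega) h0, S.row_lt i j' h0⟩

lemma up_pred (S : SYT 5) (i j : ℕ) (hi : i ≠ 0) (h0 : S.entry (i, j) ≠ 0) :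
    S.entry (i - 1, j) ≠ 0 ∧ S.entry (i - 1, j) < S.entry (i, j) := by
  obtain ⟨i', rfl⟩ : ∃ i', i = i' + 1 := ⟨i - 1, by omega⟩
  simp only [Nat.add_sub_cancel]
  exact ⟨S.diagram (i' + 1) j i' j (by omega) le_rfl h0, S.col_lt i' j h0⟩

lemma entry_lower (S : SYT 5) : ∀ i j, S.entry (i, j) ≠ 0 → i + j + 1 ≤ S.entry (i, j) := by
  intro i
  induction i with
  | zero =>
    intro j
    induction j with
    | zero => intro h; omega
    | succ j ihj =>
      intro h
      have hl := left_pred S 0 (j + 1) (by omega) h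
      simp only [Nat.add_sub_cancel] at hl
      have := ihj hl.1
      omega
  | succ i ihi =>
    intro j h
    have hu := up_pred S (i + 1) j (by omega) h
    simp only [Nat.add_sub_cancel] at hu
    have := ihi j hu.1
    omega

lemma del_eq (S : SYT 5) (L : List (ℕ × ℕ)) (hL : S.entry = listFun L) (hnd : L.Nodup)
    (hlen : L.length = 5) (m : ℕ) (h1 : 1 ≤ m) (h5 : m ≤ 5) : S.del m = delL L m := by
  have hpos : 0 < m ∧ ∃ c, S.entry c = m := ⟨h1, S.exists_cell m h1 h5⟩
  have hgd : S.entry (L.getD (m - 1) (0, 0)) = m := by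
    rw [hL, listFun_getD L hnd (m - 1) (by omega) (0, 0)]
    omega
  have hc : Classical.choose hpos.2 = L.getD (m - 1) (0, 0) :=
    cell_eq S (Classical.choose_spec hpos.2) hgd (by omega)
  show delRaw 5 S.entry m = delL L m
  rw [delRaw, dif_pos hpos, hc, hL]
  rfl
lemma mem_cells2 (a b : ℕ) (h : a + b ≤ 1) : (a, b) ∈ cells2 := by
  have ha : a ≤ 1 := by omega
  have hb : b ≤ 1 := by omega
  interval_cases a <;> interval_cases b <;> first | decide | omega

lemma mem_cells3 (a b : ℕ) (h : a + b ≤ 2) : (a, b) ∈ cells3 := by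
  have ha : a ≤ 2 := by omega
  have hb : b ≤ 2 := by omega
  interval_cases a <;> interval_cases b <;> first | decide | omega

lemma mem_cells4 (a b : ℕ) (h : a + b ≤ 3) : (a, b) ∈ cells4 := by
  have ha : a ≤ 3 := by omega
  have hb : b ≤ 3 := by omega
  interval_cases a <;> interval_cases b <;> first | decide | omega

lemma mem_cells5 (a b : ℕ) (h : a + b ≤ 4) : (a, b) ∈ cells5 := by
  have ha : a ≤ 4 := by omega
  have hb : b ≤ 4 := by omega
  interval_cases a <;> interval_cases b <;> first | decide | omega
lemma classify (S : SYT 5) :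
    ∃ L : List (ℕ × ℕ), S.entry = listFun L ∧ L.Nodup ∧ L.length = 5 ∧ L ∈ valid26 := by
  obtain ⟨p1, h1⟩ := S.exists_cell 1 (by norm_num) (by norm_num)
  obtain ⟨p2, h2⟩ := S.exists_cell 2 (by norm_num) (by norm_num)
  obtain ⟨p3, h3⟩ := S.exists_cell 3 (by norm_num) (by norm_num)
  obtain ⟨p4, h4⟩ := S.exists_cell 4 (by norm_num) (by norm_num)
  obtain ⟨p5, h5⟩ := S.exists_cell 5 (by norm_num) (by norm_num)
  have key_ne : ∀ (a b : ℕ × ℕ) (u v : ℕ), S.entry a = u → S.entry b = v → u ≠ v → a ≠ b := by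
    intro a b u v hu hv huv e
    subst e
    exact huv (hu.symm.trans hv)
  have hp1 : p1 = (0, 0) := by
    obtain ⟨a, b⟩ := p1
    have hb : b = 0 := by
      by_contra hb
      have hl := left_pred S a b hb (by rw [h1]; norm_num)
      omega
    have ha : a = 0 := by
      by_contra ha
      have hu := up_pred S a b ha (by rw [h1]; norm_num)
      omega
    rw [ha, hb]
  subst hp1
  have n12 : ((0,0) : ℕ×ℕ) ≠ p2 := key_ne _ _ 1 2 h1 h2 (by norm_num)
  have n13 : ((0,0) : ℕ×ℕ) ≠ p3 := key_ne _ _ 1 3 h1 h3 (by norm_num)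
  have n14 : ((0,0) : ℕ×ℕ) ≠ p4 := key_ne _ _ 1 4 h1 h4 (by norm_num)
  have n15 : ((0,0) : ℕ×ℕ) ≠ p5 := key_ne _ _ 1 5 h1 h5 (by norm_num)
  have n23 : p2 ≠ p3 := key_ne _ _ 2 3 h2 h3 (by norm_num)
  have n24 : p2 ≠ p4 := key_ne _ _ 2 4 h2 h4 (by norm_num)
  have n25 : p2 ≠ p5 := key_ne _ _ 2 5 h2 h5 (by norm_num)
  have n34 : p3 ≠ p4 := key_ne _ _ 3 4 h3 h4 (by norm_num)
  have n35 : p3 ≠ p5 := key_ne _ _ 3 5 h3 h5 (by norm_num)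
  have n45 : p4 ≠ p5 := key_ne _ _ 4 5 h4 h5 (by norm_num)
  have hnz : ∀ (p : ℕ × ℕ) (k : ℕ), S.entry p = k → k ≠ 0 → S.entry (p.1, p.2) ≠ 0 := by
    intro p k hp hk
    rw [Prod.mk.eta, hp]
    exact hk
  have hb2 : p2.1 + p2.2 + 1 ≤ 2 := by
    have := entry_lower S p2.1 p2.2 (hnz p2 2 h2 (by norm_num))
    rw [Prod.mk.eta, h2] at this
    exact this
  have hb3 : p3.1 + p3.2 + 1 ≤ 3 := by
    have := entry_lower S p3.1 p3.2 (hnz p3 3 h3 (by norm_num))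
    rw [Prod.mk.eta, h3] at this
    exact this
  have hb4 : p4.1 + p4.2 + 1 ≤ 4 := by
    have := entry_lower S p4.1 p4.2 (hnz p4 4 h4 (by norm_num))
    rw [Prod.mk.eta, h4] at this
    exact this
  have hb5 : p5.1 + p5.2 + 1 ≤ 5 := by
    have := entry_lower S p5.1 p5.2 (hnz p5 5 h5 (by norm_num))
    rw [Prod.mk.eta, h5] at this
    exact this
  have m2 : p2 ∈ cells2 := by
    rw [← Prod.mk.eta (p := p2)]
    exact mem_cells2 p2.1 p2.2 (by omega)
  have m3 : p3 ∈ cells3 := by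
    rw [← Prod.mk.eta (p := p3)]
    exact mem_cells3 p3.1 p3.2 (by omega)
  have m4 : p4 ∈ cells4 := by
    rw [← Prod.mk.eta (p := p4)]
    exact mem_cells4 p4.1 p4.2 (by omega)
  have m5 : p5 ∈ cells5 := by
    rw [← Prod.mk.eta (p := p5)]
    exact mem_cells5 p5.1 p5.2 (by omega)
  -- neighbor conditions
  have nb2 : nb p2 [(0,0)] := by
    constructor
    · by_cases hz : p2.2 = 0
      · exact Or.inl hz
      · right
        have hl := left_pred S p2.1 p2.2 hz (hnz p2 2 h2 (by norm_num))
        rw [Prod.mk.eta, h2] at hl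
        have hv : S.entry (p2.1, p2.2 - 1) = 1 := by omega
        rw [cell_eq S hv h1 (by norm_num)]
        simp
    · by_cases hz : p2.1 = 0
      · exact Or.inl hz
      · right
        have hu := up_pred S p2.1 p2.2 hz (hnz p2 2 h2 (by norm_num))
        rw [Prod.mk.eta, h2] at hu
        have hv : S.entry (p2.1 - 1, p2.2) = 1 := by omega
        rw [cell_eq S hv h1 (by norm_num)]
        simp
  have nb3 : nb p3 [(0,0), p2] := by
    constructor
    · by_cases hz : p3.2 = 0
      · exact Or.inl hz
      · right
        have hl := left_pred S p3.1 p3.2 hz (hnz p3 3 h3 (by norm_num))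
        rw [Prod.mk.eta, h3] at hl
        have hv : S.entry (p3.1, p3.2 - 1) = 1 ∨ S.entry (p3.1, p3.2 - 1) = 2 := by omega
        rcases hv with hv | hv
        · rw [cell_eq S hv h1 (by norm_num)]; simp
        · rw [cell_eq S hv h2 (by norm_num)]; simp
    · by_cases hz : p3.1 = 0
      · exact Or.inl hz
      · right
        have hu := up_pred S p3.1 p3.2 hz (hnz p3 3 h3 (by norm_num))
        rw [Prod.mk.eta, h3] at hu
        have hv : S.entry (p3.1 - 1, p3.2) = 1 ∨ S.entry (p3.1 - 1, p3.2) = 2 := by omega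
        rcases hv with hv | hv
        · rw [cell_eq S hv h1 (by norm_num)]; simp
        · rw [cell_eq S hv h2 (by norm_num)]; simp
  have nb4 : nb p4 [(0,0), p2, p3] := by
    constructor
    · by_cases hz : p4.2 = 0
      · exact Or.inl hz
      · right
        have hl := left_pred S p4.1 p4.2 hz (hnz p4 4 h4 (by norm_num))
        rw [Prod.mk.eta, h4] at hl
        have hv : S.entry (p4.1, p4.2 - 1) = 1 ∨ S.entry (p4.1, p4.2 - 1) = 2 ∨
            S.entry (p4.1, p4.2 - 1) = 3 := by omega
        rcases hv with hv | hv | hv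
        · rw [cell_eq S hv h1 (by norm_num)]; simp
        · rw [cell_eq S hv h2 (by norm_num)]; simp
        · rw [cell_eq S hv h3 (by norm_num)]; simp
    · by_cases hz : p4.1 = 0
      · exact Or.inl hz
      · right
        have hu := up_pred S p4.1 p4.2 hz (hnz p4 4 h4 (by norm_num))
        rw [Prod.mk.eta, h4] at hu
        have hv : S.entry (p4.1 - 1, p4.2) = 1 ∨ S.entry (p4.1 - 1, p4.2) = 2 ∨
            S.entry (p4.1 - 1, p4.2) = 3 := by omega
        rcases hv with hv | hv | hv
        · rw [cell_eq S hv h1 (by norm_num)]; simp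
        · rw [cell_eq S hv h2 (by norm_num)]; simp
        · rw [cell_eq S hv h3 (by norm_num)]; simp
  have nb5 : nb p5 [(0,0), p2, p3, p4] := by
    constructor
    · by_cases hz : p5.2 = 0
      · exact Or.inl hz
      · right
        have hl := left_pred S p5.1 p5.2 hz (hnz p5 5 h5 (by norm_num))
        rw [Prod.mk.eta, h5] at hl
        have hv : S.entry (p5.1, p5.2 - 1) = 1 ∨ S.entry (p5.1, p5.2 - 1) = 2 ∨
            S.entry (p5.1, p5.2 - 1) = 3 ∨ S.entry (p5.1, p5.2 - 1) = 4 := by omega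
        rcases hv with hv | hv | hv | hv
        · rw [cell_eq S hv h1 (by norm_num)]; simp
        · rw [cell_eq S hv h2 (by norm_num)]; simp
        · rw [cell_eq S hv h3 (by norm_num)]; simp
        · rw [cell_eq S hv h4 (by norm_num)]; simp
    · by_cases hz : p5.1 = 0
      · exact Or.inl hz
      · right
        have hu := up_pred S p5.1 p5.2 hz (hnz p5 5 h5 (by norm_num))
        rw [Prod.mk.eta, h5] at hu
        have hv : S.entry (p5.1 - 1, p5.2) = 1 ∨ S.entry (p5.1 - 1, p5.2) = 2 ∨
            S.entry (p5.1 - 1, p5.2) = 3 ∨ S.entry (p5.1 - 1, p5.2) = 4 := by omega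
        rcases hv with hv | hv | hv | hv
        · rw [cell_eq S hv h1 (by norm_num)]; simp
        · rw [cell_eq S hv h2 (by norm_num)]; simp
        · rw [cell_eq S hv h3 (by norm_num)]; simp
        · rw [cell_eq S hv h4 (by norm_num)]; simp
  have hnodup : ([((0:ℕ),(0:ℕ)), p2, p3, p4, p5] : List (ℕ × ℕ)).Nodup := by
    simp only [List.nodup_cons, List.mem_cons, List.not_mem_nil, or_false, not_or,
      List.nodup_nil, and_true]
    exact ⟨⟨n12, n13, n14, n15⟩, ⟨n23, n24, n25⟩, ⟨n34, n35⟩, n45, not_false⟩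
  have hfun : S.entry = listFun [(0,0), p2, p3, p4, p5] := by
    funext x
    by_cases hx : S.entry x = 0
    · rw [hx]
      have hm : x ∉ ([((0:ℕ),(0:ℕ)), p2, p3, p4, p5] : List (ℕ × ℕ)) := by
        simp only [List.mem_cons, List.not_mem_nil, or_false, not_or]
        refine ⟨?_, ?_, ?_, ?_, ?_⟩ <;> intro e
        · rw [e, h1] at hx; exact one_ne_zero hx
        · rw [e, h2] at hx; norm_num at hx
        · rw [e, h3] at hx; norm_num at hx
        · rw [e, h4] at hx; norm_num at hx
        · rw [e, h5] at hx; norm_num at hx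
      exact (listFun_eq_zero _ x hm).symm
    · have hle := S.le_n x
      have h1x : 1 ≤ S.entry x := Nat.one_le_iff_ne_zero.mpr hx
      have hv : S.entry x = 1 ∨ S.entry x = 2 ∨ S.entry x = 3 ∨ S.entry x = 4 ∨
          S.entry x = 5 := by omega
      rcases hv with hv | hv | hv | hv | hv
      · rw [hv, cell_eq S hv h1 (by norm_num)]
        simp only [listFun, listFunAux]
        norm_num
      · rw [hv, cell_eq S hv h2 (by norm_num)]
        simp only [listFun, listFunAux]
        rw [if_neg n12.symm]
        norm_num
      · rw [hv, cell_eq S hv h3 (by norm_num)]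
        simp only [listFun, listFunAux]
        rw [if_neg n13.symm, if_neg n23.symm]
        norm_num
      · rw [hv, cell_eq S hv h4 (by norm_num)]
        simp only [listFun, listFunAux]
        rw [if_neg n14.symm, if_neg n24.symm, if_neg n34.symm]
        norm_num
      · rw [hv, cell_eq S hv h5 (by norm_num)]
        simp only [listFun, listFunAux]
        rw [if_neg n15.symm, if_neg n25.symm, if_neg n35.symm, if_neg n45.symm]
        norm_num
  exact ⟨[(0,0), p2, p3, p4, p5], hfun, hnodup, rfl,
    R p2 m2 p3 m3 p4 m4 p5 m5 hnodup nb2 nb3 nb4 nb5⟩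
/-- Any standard Young tableau with 5 entries and shape `(3, 2)` or `(2, 2, 1)`
can be reconstructed from its set of 1-minors. -/
theorem syt_32_or_221_reconstructible
    (T : SYT 5)
    (hshape : T.shape = {c : ℕ × ℕ | (c.1 = 0 ∧ c.2 < 3) ∨ (c.1 = 1 ∧ c.2 < 2)} ∨
      T.shape = {c : ℕ × ℕ | (c.1 < 2 ∧ c.2 < 2) ∨ (c.1 = 2 ∧ c.2 = 0)})
    (S : SYT 5) (h : minors1 S = minors1 T) : S = T := by
  obtain ⟨LS, hS, hnS, hlS, hmS⟩ := classify S
  obtain ⟨LT, hT, hnT, hlT, hmT⟩ := classify T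
  have key : ∀ (A B : SYT 5) (LA LB : List (ℕ × ℕ)), A.entry = listFun LA → LA.Nodup →
      LA.length = 5 → B.entry = listFun LB → LB.Nodup → LB.length = 5 →
      minors1 A = minors1 B → ∀ t ∈ minorTups LA, t ∈ minorTups LB := by
    intro A B LA LB hA hnA hlA hB hnB hlB hab t ht
    have main : ∀ m, 1 ≤ m → m ≤ 5 → tup (delL LA m) ∈ minorTups LB := by
      intro m hm1 hm5
      have hmem : A.del m ∈ minors1 B := by
        rw [← hab]
        exact ⟨m, hm1, hm5, rfl⟩
      obtain ⟨k, hk1, hk5, he⟩ := hmem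
      have heq : tup (delL LA m) = tup (delL LB k) := by
        rw [← del_eq A LA hA hnA hlA m hm1 hm5, he, del_eq B LB hB hnB hlB k hk1 hk5]
      rw [heq]
      have hk : k = 1 ∨ k = 2 ∨ k = 3 ∨ k = 4 ∨ k = 5 := by omega
      rcases hk with rfl | rfl | rfl | rfl | rfl <;> simp [minorTups]
    simp only [minorTups, List.mem_cons, List.not_mem_nil, or_false] at ht
    rcases ht with rfl | rfl | rfl | rfl | rfl <;> exact main _ (by norm_num) (by norm_num)
  have hsub1 := key S T LS LT hS hnS hlS hT hnT hlT h
  have hsub2 := key T S LT LS hT hnT hlT hS hnS hlS h.symm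
  have hmm : ∀ c : ℕ × ℕ, c ∈ T.shape → c ∈ LT := by
    intro c hc
    have hne : T.entry c ≠ 0 := hc
    rw [hT] at hne
    exact (listFun_ne_zero LT c).mp hne
  have hshape10 : LT ∈ valid10 := by
    apply Shp LT hmT
    rcases hshape with hs | hs
    · left
      refine ⟨?_, ?_, ?_, ?_, ?_⟩ <;> apply hmm <;> rw [hs] <;>
        simp [Set.mem_setOf_eq]
    · right
      refine ⟨?_, ?_, ?_, ?_, ?_⟩ <;> apply hmm <;> rw [hs] <;>
        simp [Set.mem_setOf_eq]
  have hLL : LS = LT := Q LS hmS LT hshape10 hsub1 hsub2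
  have hent : S.entry = T.entry := by rw [hS, hT, hLL]
  obtain ⟨f1, d1, l1, e1, i1, r1, c1⟩ := S
  obtain ⟨f2, d2, l2, e2, i2, r2, c2⟩ := T
  have : f1 = f2 := hent
  subst this
  rfl
end

section
/- The two standard Young tableaux of shape (2,2) — the one with first row (1,2) and second row (3,4), and the one with first row (1,3) and second row (2,4) — are distinct but have equal multisets of 1-minors; each multiset consists of two copies of the tableau of shape (2,1) with first row (1,3) and second row (2), and two copies of the tableau of shape (2,1) with first row (1,2) and second row (3). Hence tableaux with 4 entries of shape (2,2) are not reconstructible from their multisets (nor sets) of 1-minors. -/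
open Classical

section Aux

def fA : ℕ × ℕ → ℕ := fun c => if c = (0, 0) then 1 else if c = (0, 1) then 3
            else if c = (1, 0) then 2 else 0

def fB : ℕ × ℕ → ℕ := fun c => if c = (0, 0) then 1 else if c = (0, 1) then 2
            else if c = (1, 0) then 3 else 0

def f1 : ℕ × ℕ → ℕ := fun c => if c = (0, 0) then 1 else if c = (0, 1) then 2
        else if c = (1, 0) then 3 else if c = (1, 1) then 4 else 0

def f2 : ℕ × ℕ → ℕ := fun c => if c = (0, 0) then 1 else if c = (0, 1) then 3
        else if c = (1, 0) then 2 else if c = (1, 1) then 4 else 0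

lemma f1_cases {c : ℕ × ℕ} (h : f1 c ≠ 0) :
    c = (0,0) ∨ c = (0,1) ∨ c = (1,0) ∨ c = (1,1) := by
  by_contra hc
  push_neg at hc
  simp [f1, hc.1, hc.2.1, hc.2.2.1, hc.2.2.2, -Prod.mk_zero_zero, -Prod.mk_one_one] at h

lemma f2_cases {c : ℕ × ℕ} (h : f2 c ≠ 0) :
    c = (0,0) ∨ c = (0,1) ∨ c = (1,0) ∨ c = (1,1) := by
  by_contra hc
  push_neg at hc
  simp [f2, hc.1, hc.2.1, hc.2.2.1, hc.2.2.2, -Prod.mk_zero_zero, -Prod.mk_one_one] at h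

lemma jdtAux_succ (fuel : ℕ) (f : ℕ × ℕ → ℕ) (c : ℕ × ℕ) :
    jdtAux (fuel + 1) f c =
    (let r := f (c.1, c.2 + 1)
    let b := f (c.1 + 1, c.2)
    if r = 0 ∧ b = 0 then f
    else if b = 0 ∨ (r ≠ 0 ∧ r < b) then
      jdtAux fuel (Function.update (Function.update f c r) (c.1, c.2 + 1) 0) (c.1, c.2 + 1)
    else
      jdtAux fuel (Function.update (Function.update f c b) (c.1 + 1, c.2) 0) (c.1 + 1, c.2)) := rfl

noncomputable def T1 : SYT 4 where
  entry := f1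
  diagram := by
    intro i j i' j' hi hj hne
    have h2 : i ≤ 1 ∧ j ≤ 1 := by
      rcases f1_cases hne with h|h|h|h <;> simp_all [Prod.ext_iff]
    have hi' : i' ≤ 1 := le_trans hi h2.1
    have hj' : j' ≤ 1 := le_trans hj h2.2
    interval_cases i' <;> interval_cases j' <;>
      simp [f1, Prod.mk.injEq, -Prod.mk_zero_zero, -Prod.mk_one_one]
  le_n := by
    intro c
    by_cases h : f1 c = 0
    · omega
    · rcases f1_cases h with h|h|h|h <;> subst h <;>
        norm_num [f1, Prod.mk.injEq, -Prod.mk_zero_zero, -Prod.mk_one_one]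
  exists_cell := by
    intro k h1 h4
    interval_cases k
    · exact ⟨(0,0), rfl⟩
    · exact ⟨(0,1), rfl⟩
    · exact ⟨(1,0), rfl⟩
    · exact ⟨(1,1), rfl⟩
  inj := by
    intro c c' hne he
    have hne' : f1 c' ≠ 0 := by rw [← he]; exact hne
    rcases f1_cases hne with h|h|h|h <;> rcases f1_cases hne' with h'|h'|h'|h' <;>
      subst h <;> subst h' <;>
      simp_all [f1, Prod.mk.injEq, -Prod.mk_zero_zero, -Prod.mk_one_one]
  row_lt := by
    intro i j hne
    rcases f1_cases hne with h|h|h|h <;> rw [Prod.mk.injEq] at h <;>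
      obtain ⟨h1, h2⟩ := h <;> subst h1 <;>
      first
        | omega
        | (have hj : j = 0 := by omega
           subst hj
           norm_num [f1, Prod.mk.injEq, -Prod.mk_zero_zero, -Prod.mk_one_one])
  col_lt := by
    intro i j hne
    rcases f1_cases hne with h|h|h|h <;> rw [Prod.mk.injEq] at h <;>
      obtain ⟨h1, h2⟩ := h <;> subst h2 <;>
      first
        | omega
        | (have hi : i = 0 := by omega
           subst hi
           norm_num [f1, Prod.mk.injEq, -Prod.mk_zero_zero, -Prod.mk_one_one])

noncomputable def T2 : SYT 4 where
  entry := f2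
  diagram := by
    intro i j i' j' hi hj hne
    have h2 : i ≤ 1 ∧ j ≤ 1 := by
      rcases f2_cases hne with h|h|h|h <;> simp_all [Prod.ext_iff]
    have hi' : i' ≤ 1 := le_trans hi h2.1
    have hj' : j' ≤ 1 := le_trans hj h2.2
    interval_cases i' <;> interval_cases j' <;>
      simp [f2, Prod.mk.injEq, -Prod.mk_zero_zero, -Prod.mk_one_one]
  le_n := by
    intro c
    by_cases h : f2 c = 0
    · omega
    · rcases f2_cases h with h|h|h|h <;> subst h <;>
        norm_num [f2, Prod.mk.injEq, -Prod.mk_zero_zero, -Prod.mk_one_one]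
  exists_cell := by
    intro k h1 h4
    interval_cases k
    · exact ⟨(0,0), rfl⟩
    · exact ⟨(1,0), rfl⟩
    · exact ⟨(0,1), rfl⟩
    · exact ⟨(1,1), rfl⟩
  inj := by
    intro c c' hne he
    have hne' : f2 c' ≠ 0 := by rw [← he]; exact hne
    rcases f2_cases hne with h|h|h|h <;> rcases f2_cases hne' with h'|h'|h'|h' <;>
      subst h <;> subst h' <;>
      simp_all [f2, Prod.mk.injEq, -Prod.mk_zero_zero, -Prod.mk_one_one]
  row_lt := by
    intro i j hne
    rcases f2_cases hne with h|h|h|h <;> rw [Prod.mk.injEq] at h <;>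
      obtain ⟨h1, h2⟩ := h <;> subst h1 <;>
      first
        | omega
        | (have hj : j = 0 := by omega
           subst hj
           norm_num [f2, Prod.mk.injEq, -Prod.mk_zero_zero, -Prod.mk_one_one])
  col_lt := by
    intro i j hne
    rcases f2_cases hne with h|h|h|h <;> rw [Prod.mk.injEq] at h <;>
      obtain ⟨h1, h2⟩ := h <;> subst h2 <;>
      first
        | omega
        | (have hi : i = 0 := by omega
           subst hi
           norm_num [f2, Prod.mk.injEq, -Prod.mk_zero_zero, -Prod.mk_one_one])

lemma d11 : delRaw 4 f1 1 = fA := by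
  have h : 0 < 1 ∧ ∃ c, f1 c = 1 := ⟨one_pos, ⟨(0,0), rfl⟩⟩
  rw [delRaw, dif_pos h]
  have hc : Classical.choose h.2 = (0,0) := by
    have hs := Classical.choose_spec h.2
    rcases f1_cases (c := Classical.choose h.2) (by rw [hs]; norm_num) with h'|h'|h'|h' <;>
      rw [h'] at hs ⊢ <;>
      simp [f1, Prod.mk.injEq, -Prod.mk_zero_zero, -Prod.mk_one_one] at hs ⊢
  rw [hc]
  funext x
  simp only [show (4:ℕ) = 3+1 from rfl, show (3:ℕ) = 2+1 from rfl, jdtAux_succ]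
  norm_num [Function.update_apply, f1, fA, Prod.mk.injEq, -Prod.mk_zero_zero, -Prod.mk_one_one]
  split_ifs <;> simp_all [Prod.ext_iff]

lemma d12 : delRaw 4 f1 2 = fA := by
  have h : 0 < 2 ∧ ∃ c, f1 c = 2 := ⟨by norm_num, ⟨(0,1), rfl⟩⟩
  rw [delRaw, dif_pos h]
  have hc : Classical.choose h.2 = (0,1) := by
    have hs := Classical.choose_spec h.2
    rcases f1_cases (c := Classical.choose h.2) (by rw [hs]; norm_num) with h'|h'|h'|h' <;>
      rw [h'] at hs ⊢ <;>
      simp [f1, Prod.mk.injEq, -Prod.mk_zero_zero, -Prod.mk_one_one] at hs ⊢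
  rw [hc]
  funext x
  simp only [show (4:ℕ) = 3+1 from rfl, show (3:ℕ) = 2+1 from rfl, jdtAux_succ]
  norm_num [Function.update_apply, f1, fA, Prod.mk.injEq, -Prod.mk_zero_zero, -Prod.mk_one_one]
  split_ifs <;> simp_all [Prod.ext_iff]

lemma d13 : delRaw 4 f1 3 = fB := by
  have h : 0 < 3 ∧ ∃ c, f1 c = 3 := ⟨by norm_num, ⟨(1,0), rfl⟩⟩
  rw [delRaw, dif_pos h]
  have hc : Classical.choose h.2 = (1,0) := by
    have hs := Classical.choose_spec h.2
    rcases f1_cases (c := Classical.choose h.2) (by rw [hs]; norm_num) with h'|h'|h'|h' <;>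
      rw [h'] at hs ⊢ <;>
      simp [f1, Prod.mk.injEq, -Prod.mk_zero_zero, -Prod.mk_one_one] at hs ⊢
  rw [hc]
  funext x
  simp only [show (4:ℕ) = 3+1 from rfl, show (3:ℕ) = 2+1 from rfl, jdtAux_succ]
  norm_num [Function.update_apply, f1, fB, Prod.mk.injEq, -Prod.mk_zero_zero, -Prod.mk_one_one]
  split_ifs <;> simp_all [Prod.ext_iff]

lemma d14 : delRaw 4 f1 4 = fB := by
  have h : 0 < 4 ∧ ∃ c, f1 c = 4 := ⟨by norm_num, ⟨(1,1), rfl⟩⟩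
  rw [delRaw, dif_pos h]
  have hc : Classical.choose h.2 = (1,1) := by
    have hs := Classical.choose_spec h.2
    rcases f1_cases (c := Classical.choose h.2) (by rw [hs]; norm_num) with h'|h'|h'|h' <;>
      rw [h'] at hs ⊢ <;>
      simp [f1, Prod.mk.injEq, -Prod.mk_zero_zero, -Prod.mk_one_one] at hs ⊢
  rw [hc]
  funext x
  simp only [show (4:ℕ) = 3+1 from rfl, show (3:ℕ) = 2+1 from rfl, jdtAux_succ]
  norm_num [Function.update_apply, f1, fB, Prod.mk.injEq, -Prod.mk_zero_zero, -Prod.mk_one_one]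
  split_ifs <;> simp_all [Prod.ext_iff]

lemma d21 : delRaw 4 f2 1 = fB := by
  have h : 0 < 1 ∧ ∃ c, f2 c = 1 := ⟨one_pos, ⟨(0,0), rfl⟩⟩
  rw [delRaw, dif_pos h]
  have hc : Classical.choose h.2 = (0,0) := by
    have hs := Classical.choose_spec h.2
    rcases f2_cases (c := Classical.choose h.2) (by rw [hs]; norm_num) with h'|h'|h'|h' <;>
      rw [h'] at hs ⊢ <;>
      simp [f2, Prod.mk.injEq, -Prod.mk_zero_zero, -Prod.mk_one_one] at hs ⊢
  rw [hc]
  funext x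
  simp only [show (4:ℕ) = 3+1 from rfl, show (3:ℕ) = 2+1 from rfl, jdtAux_succ]
  norm_num [Function.update_apply, f2, fB, Prod.mk.injEq, -Prod.mk_zero_zero, -Prod.mk_one_one]
  split_ifs <;> simp_all [Prod.ext_iff]

lemma d22 : delRaw 4 f2 2 = fB := by
  have h : 0 < 2 ∧ ∃ c, f2 c = 2 := ⟨by norm_num, ⟨(1,0), rfl⟩⟩
  rw [delRaw, dif_pos h]
  have hc : Classical.choose h.2 = (1,0) := by
    have hs := Classical.choose_spec h.2
    rcases f2_cases (c := Classical.choose h.2) (by rw [hs]; norm_num) with h'|h'|h'|h' <;>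
      rw [h'] at hs ⊢ <;>
      simp [f2, Prod.mk.injEq, -Prod.mk_zero_zero, -Prod.mk_one_one] at hs ⊢
  rw [hc]
  funext x
  simp only [show (4:ℕ) = 3+1 from rfl, show (3:ℕ) = 2+1 from rfl, jdtAux_succ]
  norm_num [Function.update_apply, f2, fB, Prod.mk.injEq, -Prod.mk_zero_zero, -Prod.mk_one_one]
  split_ifs <;> simp_all [Prod.ext_iff]

lemma d23 : delRaw 4 f2 3 = fA := by
  have h : 0 < 3 ∧ ∃ c, f2 c = 3 := ⟨by norm_num, ⟨(0,1), rfl⟩⟩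
  rw [delRaw, dif_pos h]
  have hc : Classical.choose h.2 = (0,1) := by
    have hs := Classical.choose_spec h.2
    rcases f2_cases (c := Classical.choose h.2) (by rw [hs]; norm_num) with h'|h'|h'|h' <;>
      rw [h'] at hs ⊢ <;>
      simp [f2, Prod.mk.injEq, -Prod.mk_zero_zero, -Prod.mk_one_one] at hs ⊢
  rw [hc]
  funext x
  simp only [show (4:ℕ) = 3+1 from rfl, show (3:ℕ) = 2+1 from rfl, jdtAux_succ]
  norm_num [Function.update_apply, f2, fA, Prod.mk.injEq, -Prod.mk_zero_zero, -Prod.mk_one_one]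
  split_ifs <;> simp_all [Prod.ext_iff]

lemma d24 : delRaw 4 f2 4 = fA := by
  have h : 0 < 4 ∧ ∃ c, f2 c = 4 := ⟨by norm_num, ⟨(1,1), rfl⟩⟩
  rw [delRaw, dif_pos h]
  have hc : Classical.choose h.2 = (1,1) := by
    have hs := Classical.choose_spec h.2
    rcases f2_cases (c := Classical.choose h.2) (by rw [hs]; norm_num) with h'|h'|h'|h' <;>
      rw [h'] at hs ⊢ <;>
      simp [f2, Prod.mk.injEq, -Prod.mk_zero_zero, -Prod.mk_one_one] at hs ⊢
  rw [hc]
  funext x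
  simp only [show (4:ℕ) = 3+1 from rfl, show (3:ℕ) = 2+1 from rfl, jdtAux_succ]
  norm_num [Function.update_apply, f2, fA, Prod.mk.injEq, -Prod.mk_zero_zero, -Prod.mk_one_one]
  split_ifs <;> simp_all [Prod.ext_iff]

lemma T1_del (m : ℕ) : T1.del m = delRaw 4 f1 m := rfl
lemma T2_del (m : ℕ) : T2.del m = delRaw 4 f2 m := rfl

lemma hIcc : (Finset.Icc 1 4).val = ({1, 2, 3, 4} : Multiset ℕ) := by decide

lemma minors1M_T1 : minors1M T1 = {fA, fA, fB, fB} := by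
  rw [minors1M, hIcc]
  simp only [Multiset.insert_eq_cons, Multiset.map_cons, Multiset.map_singleton,
    T1_del, d11, d12, d13, d14]

lemma minors1M_T2 : minors1M T2 = {fB, fB, fA, fA} := by
  rw [minors1M, hIcc]
  simp only [Multiset.insert_eq_cons, Multiset.map_cons, Multiset.map_singleton,
    T2_del, d21, d22, d23, d24]

lemma swap4 {X : Type} (a b : X) : ({b, b, a, a} : Multiset X) = {a, a, b, b} := by
  classical
  simp only [Multiset.insert_eq_cons]
  ext x
  simp only [Multiset.count_cons, Multiset.count_singleton]
  split_ifs <;> omega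

end Aux

/-- The two standard Young tableaux of shape `(2, 2)` -- with rows
`(1, 2), (3, 4)` and `(1, 3), (2, 4)` respectively -- are distinct but have
equal multisets (hence also equal sets) of 1-minors; each multiset consists of
two copies of the tableau with rows `(1, 3), (2)` and two copies of the tableau
with rows `(1, 2), (3)`.  Hence tableaux with 4 entries of shape `(2, 2)` are
not reconstructible from their multisets (nor sets) of 1-minors. -/
theorem syt_shape_22_not_reconstructible :
    ∃ T₁ T₂ : SYT 4,
      T₁.entry = (fun c : ℕ × ℕ => if c = (0, 0) then 1 else if c = (0, 1) then 2
        else if c = (1, 0) then 3 else if c = (1, 1) then 4 else 0) ∧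
      T₂.entry = (fun c : ℕ × ℕ => if c = (0, 0) then 1 else if c = (0, 1) then 3
        else if c = (1, 0) then 2 else if c = (1, 1) then 4 else 0) ∧
      T₁ ≠ T₂ ∧
      minors1M T₁ = minors1M T₂ ∧
      minors1 T₁ = minors1 T₂ ∧
      minors1M T₁ =
        {(fun c : ℕ × ℕ => if c = (0, 0) then 1 else if c = (0, 1) then 3
            else if c = (1, 0) then 2 else 0),
         (fun c : ℕ × ℕ => if c = (0, 0) then 1 else if c = (0, 1) then 3
            else if c = (1, 0) then 2 else 0),
         (fun c : ℕ × ℕ => if c = (0, 0) then 1 else if c = (0, 1) then 2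
            else if c = (1, 0) then 3 else 0),
         (fun c : ℕ × ℕ => if c = (0, 0) then 1 else if c = (0, 1) then 2
            else if c = (1, 0) then 3 else 0)} := by

  refine ⟨T1, T2, rfl, rfl, ?_, ?_, ?_, ?_⟩
  · intro h
    have he := congrFun (congrArg SYT.entry h) (0, 1)
    simp [T1, T2, f1, f2, Prod.mk.injEq, -Prod.mk_zero_zero, -Prod.mk_one_one] at he
  · rw [minors1M_T1, minors1M_T2, swap4]
  · ext g
    simp only [minors1, Set.mem_setOf_eq]
    constructor
    · rintro ⟨m, h1, h4, rfl⟩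
      interval_cases m
      · exact ⟨4, by norm_num, by norm_num, by rw [T1_del, T2_del, d11, d24]⟩
      · exact ⟨3, by norm_num, by norm_num, by rw [T1_del, T2_del, d12, d23]⟩
      · exact ⟨1, by norm_num, by norm_num, by rw [T1_del, T2_del, d13, d21]⟩
      · exact ⟨2, by norm_num, by norm_num, by rw [T1_del, T2_del, d14, d22]⟩
    · rintro ⟨m, h1, h4, rfl⟩
      interval_cases m
      · exact ⟨3, by norm_num, by norm_num, by rw [T1_del, T2_del, d13, d21]⟩
      · exact ⟨4, by norm_num, by norm_num, by rw [T1_del, T2_del, d14, d22]⟩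
      · exact ⟨1, by norm_num, by norm_num, by rw [T1_del, T2_del, d11, d23]⟩
      · exact ⟨2, by norm_num, by norm_num, by rw [T1_del, T2_del, d12, d24]⟩
  · rw [minors1M_T1]
    rfl
end

section
/- Let T be a standard Young tableau with n ≥ 2 entries. If all 1-minors of T have the same shape, then T has exactly one outer corner; equivalently, the shape of T is rectangular, of the form (ℓ, ℓ, …, ℓ) for some ℓ. -/
open Classical

lemma jdt_stop (fuel : ℕ) (f : ℕ × ℕ → ℕ) (c : ℕ × ℕ)
    (hr : f (c.1, c.2 + 1) = 0) (hb : f (c.1 + 1, c.2) = 0) :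
    jdtAux fuel f c = f := by
  cases fuel with
  | zero => rfl
  | succ k => simp [jdtAux, hr, hb]

lemma corner_del_shape {n : ℕ} (T : SYT n) (c : ℕ × ℕ)
    (hc : IsOuterCorner T.entry c) :
    shapeOf (T.del (T.entry c)) = T.shape \ {c} := by
  obtain ⟨h0, hr, hb⟩ := hc
  have h : 0 < T.entry c ∧ ∃ x, T.entry x = T.entry c :=
    ⟨Nat.pos_of_ne_zero h0, ⟨c, rfl⟩⟩
  have hcc : Classical.choose h.2 = c := by
    apply T.inj
    · rw [Classical.choose_spec h.2]; exact h0
    · exact Classical.choose_spec h.2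
  unfold SYT.del delRaw
  rw [dif_pos h, hcc]
  have hgr : Function.update T.entry c 0 (c.1, c.2 + 1) = 0 := by
    rw [Function.update_of_ne (by simp [Prod.ext_iff]) _ _]; exact hr
  have hgb : Function.update T.entry c 0 (c.1 + 1, c.2) = 0 := by
    rw [Function.update_of_ne (by simp [Prod.ext_iff]) _ _]; exact hb
  rw [jdt_stop n _ c hgr hgb]
  ext x
  simp only [shapeOf, SYT.shape, Set.mem_setOf_eq, Set.mem_diff,
    Set.mem_singleton_iff]
  by_cases hx : x = c
  · subst hx; simp
  · rw [Function.update_of_ne hx]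
    constructor
    · intro hne
      refine ⟨?_, hx⟩
      by_cases hlt : T.entry c < T.entry x
      · omega
      · rw [if_neg hlt] at hne; exact hne
    · intro ⟨hne, _⟩
      by_cases hlt : T.entry c < T.entry x
      · rw [if_pos hlt]; omega
      · rw [if_neg hlt]; exact hne

lemma col0_ge {n : ℕ} (T : SYT n) : ∀ i, T.entry (i, 0) ≠ 0 → i + 1 ≤ T.entry (i, 0) := by
  intro i
  induction i with
  | zero => intro h; omega
  | succ k ih =>
    intro h
    have hk : T.entry (k, 0) ≠ 0 := T.diagram (k+1) 0 k 0 (by omega) le_rfl h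
    have := T.col_lt k 0 h
    have := ih hk
    omega

lemma row0_ge {n : ℕ} (T : SYT n) : ∀ j, T.entry (0, j) ≠ 0 → j + 1 ≤ T.entry (0, j) := by
  intro j
  induction j with
  | zero => intro h; omega
  | succ k ih =>
    intro h
    have hk : T.entry (0, k) ≠ 0 := T.diagram 0 (k+1) 0 k le_rfl (by omega) h
    have := T.row_lt 0 k h
    have := ih hk
    omega

lemma coord_bound {n : ℕ} (T : SYT n) (c : ℕ × ℕ) (hne : T.entry c ≠ 0) :
    c.1 < n ∧ c.2 < n := by
  have h1 : T.entry (c.1, 0) ≠ 0 := T.diagram c.1 c.2 c.1 0 le_rfl (by omega) hne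
  have h2 : T.entry (0, c.2) ≠ 0 := T.diagram c.1 c.2 0 c.2 (by omega) le_rfl hne
  have b1 := col0_ge T c.1 h1
  have b2 := row0_ge T c.2 h2
  have l1 := T.le_n (c.1, 0)
  have l2 := T.le_n (0, c.2)
  omega

lemma exists_corner_ge {n : ℕ} (T : SYT n) :
    ∀ k c, T.entry c ≠ 0 → 2 * n ≤ c.1 + c.2 + k →
      ∃ c', IsOuterCorner T.entry c' ∧ c.1 ≤ c'.1 ∧ c.2 ≤ c'.2 := by
  intro k
  induction k with
  | zero =>
    intro c hne hsum
    have := coord_bound T c hne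
    omega
  | succ k ih =>
    intro c hne hsum
    by_cases hr : T.entry (c.1, c.2 + 1) = 0
    · by_cases hb : T.entry (c.1 + 1, c.2) = 0
      · exact ⟨c, ⟨hne, hr, hb⟩, le_rfl, le_rfl⟩
      · obtain ⟨c', hc', h1, h2⟩ := ih (c.1 + 1, c.2) hb (by simp; omega)
        exact ⟨c', hc', by simp at h1; omega, by simp at h2; omega⟩
    · obtain ⟨c', hc', h1, h2⟩ := ih (c.1, c.2 + 1) hr (by simp; omega)
      exact ⟨c', hc', by simp at h1; omega, by simp at h2; omega⟩

/-- If all 1-minors of a standard Young tableau `T` with `n ≥ 2` entries have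
the same shape, then `T` has exactly one outer corner; equivalently, the shape
of `T` is rectangular, of the form `(ℓ, ℓ, …, ℓ)`. -/
theorem syt_minors_same_shape_implies_rectangular
    (n : ℕ) (hn : 2 ≤ n) (T : SYT n)
    (h : ∀ g₁ ∈ minors1 T, ∀ g₂ ∈ minors1 T, shapeOf g₁ = shapeOf g₂) :
    (∃! c : ℕ × ℕ, IsOuterCorner T.entry c) ∧
      ∃ k ℓ : ℕ, T.shape = {c : ℕ × ℕ | c.1 < k ∧ c.2 < ℓ} := by
  -- the cell containing n is an outer corner
  obtain ⟨cn, hcn⟩ := T.exists_cell n (by omega) le_rfl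
  have hcn0 : T.entry cn ≠ 0 := by omega
  have hcorner : IsOuterCorner T.entry cn := by
    refine ⟨hcn0, ?_, ?_⟩
    · by_contra hr
      have hcn' : T.entry (cn.1, cn.2) = n := by rw [Prod.mk.eta]; exact hcn
      have := T.row_lt cn.1 cn.2 hr
      have := T.le_n (cn.1, cn.2 + 1)
      omega
    · by_contra hb
      have hcn' : T.entry (cn.1, cn.2) = n := by rw [Prod.mk.eta]; exact hcn
      have := T.col_lt cn.1 cn.2 hb
      have := T.le_n (cn.1 + 1, cn.2)
      omega
  -- any two outer corners are equal
  have huniq : ∀ c c', IsOuterCorner T.entry c → IsOuterCorner T.entry c' → c = c' := by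
    intro c c' hc hc'
    have hmem : T.del (T.entry c) ∈ minors1 T :=
      ⟨T.entry c, Nat.one_le_iff_ne_zero.mpr hc.1, T.le_n c, rfl⟩
    have hmem' : T.del (T.entry c') ∈ minors1 T :=
      ⟨T.entry c', Nat.one_le_iff_ne_zero.mpr hc'.1, T.le_n c', rfl⟩
    have hsh := h _ hmem _ hmem'
    rw [corner_del_shape T c hc, corner_del_shape T c' hc'] at hsh
    by_contra hne
    have : c ∈ T.shape \ {c'} := ⟨hc.1, hne⟩
    rw [← hsh] at this
    exact this.2 rfl
  refine ⟨⟨cn, hcorner, fun c hc => huniq c cn hc hcorner⟩, cn.1 + 1, cn.2 + 1, ?_⟩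
  ext x
  simp only [SYT.shape, shapeOf, Set.mem_setOf_eq]
  constructor
  · intro hx
    obtain ⟨c', hc', h1, h2⟩ := exists_corner_ge T (2 * n) x hx (by omega)
    have := huniq c' cn hc' hcorner
    subst this
    omega
  · intro ⟨h1, h2⟩
    exact T.diagram cn.1 cn.2 x.1 x.2 (by omega) (by omega) hcorner.1
end

section
/- Let T be a standard Young tableau with n ≥ 2 entries and let c be an outer corner of T. Then there exists m with 1 ≤ m ≤ n such that the Young diagram of the shape of the 1-minor T − m is the Young diagram of T with the cell c removed; that is, each outer corner of T is the terminal cell of at least one jeu de taquin deletion process. -/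
open Classical

/-- Each outer corner `c` of a standard Young tableau `T` with `n ≥ 2` entries
is the terminal cell of at least one jeu de taquin deletion process: some
1-minor `T - m` has shape exactly the shape of `T` with the cell `c`
removed. -/
theorem syt_outer_corner_is_terminal_for_some_deletion
    (n : ℕ) (hn : 2 ≤ n) (T : SYT n)
    (c : ℕ × ℕ) (hc : IsOuterCorner T.entry c) :
    ∃ m, 1 ≤ m ∧ m ≤ n ∧ shapeOf (T.del m) = T.shape \ {c} := by
  obtain ⟨hc0, hr, hb⟩ := hc
  set m := T.entry c with hm
  refine ⟨m, Nat.one_le_iff_ne_zero.2 hc0, T.le_n c, ?_⟩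
  have hpos : 0 < m ∧ ∃ c', T.entry c' = m := ⟨Nat.pos_of_ne_zero hc0, ⟨c, rfl⟩⟩
  have hchoose : Classical.choose hpos.2 = c := by
    have hspec := Classical.choose_spec hpos.2
    exact T.inj _ c (by rw [hspec]; exact hc0) (by rw [hspec])
  unfold SYT.del delRaw
  rw [dif_pos hpos]
  simp only [hchoose]
  set f := Function.update T.entry c 0 with hf
  have hfr : f (c.1, c.2 + 1) = 0 := by
    rw [hf, Function.update_apply]
    split
    · rfl
    · exact hr
  have hfb : f (c.1 + 1, c.2) = 0 := by
    rw [hf, Function.update_apply]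
    split
    · rfl
    · exact hb
  have hjdt : jdtAux n f c = f := by
    obtain ⟨k, rfl⟩ : ∃ k, n = k + 1 := ⟨n - 1, by omega⟩
    rw [jdtAux]
    simp only [hfr, hfb]
    rw [if_pos ⟨trivial, trivial⟩]
  rw [hjdt]
  ext x
  simp only [shapeOf, SYT.shape, Set.mem_setOf_eq, Set.mem_diff, Set.mem_singleton_iff]
  constructor
  · intro hx
    by_cases hxc : x = c
    · exfalso
      apply hx
      subst hxc
      simp [hf]
    · have hfx : f x = T.entry x := by
        rw [hf, Function.update_apply, if_neg hxc]
      refine ⟨?_, hxc⟩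
      intro h0
      rw [hfx] at hx
      split at hx <;> simp_all
  · rintro ⟨hx, hxc⟩
    have hfx : f x = T.entry x := by
      rw [hf, Function.update_apply, if_neg hxc]
    rw [hfx]
    split
    · omega
    · exact hx
end
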